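/- Let M, N ≥ 2, let A be a Hermitian (MN)×(MN) complex matrix, let λ₀ ≤ λ₁ ≤ … ≤ λ_{MN−1} be its eigenvalues listed in nondecreasing order, and let (v₀, …, v_{MN−1}) be a corresponding orthonormal basis of eigenvectors, A v_i = λ_i v_i. Then A is a left entanglement witness if and only if there exists k ∈ {0, 1, …, MN−2} such that the linear span of {v₀, …, v_k} contains no nonzero vector of the form x ⊗ y (Kronecker product, x ∈ ℂ^M, y ∈ ℂ^N) and λ_{k+1} > λ_k. -/

import Mathlib

open Matrix
open scoped Kronecker ComplexOrder

noncomputable section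

/-- `x` is a unit vector in `ℂ^d`. -/
def isUnitVec {d : ℕ} (x : Fin d → ℂ) : Prop := ∑ i, ‖x i‖ ^ 2 = 1

/-- The rank-one projector `x xᴴ`. -/
def outer {d : ℕ} (x : Fin d → ℂ) : Matrix (Fin d) (Fin d) ℂ :=
  Matrix.vecMulVec x (star x)

/-- The set of pure product states `(x xᴴ) ⊗ (y yᴴ)` for unit vectors `x, y`. -/
def pureProduct (M N : ℕ) : Set (Matrix (Fin M × Fin N) (Fin M × Fin N) ℂ) :=
  {σ | ∃ x : Fin M → ℂ, ∃ y : Fin N → ℂ,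
    isUnitVec x ∧ isUnitVec y ∧ σ = outer x ⊗ₖ outer y}

/-- The set of separable states: the convex hull (over ℝ) of the pure product states. -/
def SepStates (M N : ℕ) : Set (Matrix (Fin M × Fin N) (Fin M × Fin N) ℂ) :=
  convexHull ℝ (pureProduct M N)

/-- `ρ` is a density matrix: positive semidefinite with unit trace. -/
def IsDensity {d : Type*} [Fintype d] (ρ : Matrix d d ℂ) : Prop :=
  ρ.PosSemidef ∧ ρ.trace = 1

/-- `A` is a left entanglement witness: for some `a ∈ ℝ`, `tr(Aσ) ≥ a` for all separable
`σ`, while `tr(Aρ) < a` for some density matrix `ρ`. -/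
def IsLeftEW (M N : ℕ) (A : Matrix (Fin M × Fin N) (Fin M × Fin N) ℂ) : Prop :=
  ∃ a : ℝ, (∀ σ ∈ SepStates M N, a ≤ ((A * σ).trace).re) ∧
    ∃ ρ : Matrix (Fin M × Fin N) (Fin M × Fin N) ℂ, IsDensity ρ ∧ ((A * ρ).trace).re < a

/-- `z ∈ ℂ^M ⊗ ℂ^N` is a product vector `x ⊗ y`. -/
def IsProdVec (M N : ℕ) (z : Fin M × Fin N → ℂ) : Prop :=
  ∃ x : Fin M → ℂ, ∃ y : Fin N → ℂ, z = fun ij => x ij.1 * y ij.2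

/-!
In the orthonormal eigenbasis `v` of `A`, a density matrix `σ` has diagonal weights
`wᵢ = vᵢᴴ σ vᵢ ≥ 0` summing to `1`, and `tr(Aσ) = ∑ λᵢ wᵢ`. For a pure state `z zᴴ` the weights are
`|vᵢᴴ z|²`, so `z` lies in the span of `v₀, …, v_k` iff its weights vanish beyond `k`.

If `A` is a witness with bound `a`, then `λ₀ < a ≤ λ_max`, and for the `k` with
`λ_k < a ≤ λ_{k+1}` no unit product vector lies in the span of `v₀, …, v_k`, since its state would
have `tr(Aσ) ≤ λ_k < a`. Conversely, `tr(Aσ)` attains its minimum `a` over the compact set of pure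
product states at some `z zᴴ`; `z` has weight on some `v_j` with `j > k`, so
`a > λ₀ = tr(A v₀ v₀ᴴ)`, and by convexity `a` bounds `tr(Aσ)` from below on all separable states.
-/

section WeightedMean

variable {κ : Type*} [Fintype κ] {lam w : κ → ℝ} {m : ℝ}

theorem le_sum_mul_of_forall_le (hw : ∀ i, 0 ≤ w i) (h1 : ∑ i, w i = 1) (hm : ∀ i, m ≤ lam i) :
    m ≤ ∑ i, lam i * w i :=
  calc m = ∑ i, m * w i := by rw [← Finset.mul_sum, h1, mul_one]
    _ ≤ ∑ i, lam i * w i := Finset.sum_le_sum fun i _ => mul_le_mul_of_nonneg_right (hm i) (hw i)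

theorem lt_sum_mul_of_forall_le (hw : ∀ i, 0 ≤ w i) (h1 : ∑ i, w i = 1) (hm : ∀ i, m ≤ lam i)
    {j : κ} (hj : m < lam j) (hwj : 0 < w j) :
    m < ∑ i, lam i * w i :=
  calc m = ∑ i, m * w i := by rw [← Finset.mul_sum, h1, mul_one]
    _ < ∑ i, lam i * w i :=
      Finset.sum_lt_sum (fun i _ => mul_le_mul_of_nonneg_right (hm i) (hw i))
        ⟨j, Finset.mem_univ j, mul_lt_mul_of_pos_right hj hwj⟩

theorem sum_mul_le_of_forall_le (hw : ∀ i, 0 ≤ w i) (h1 : ∑ i, w i = 1)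
    (hm : ∀ i, w i ≠ 0 → lam i ≤ m) :
    ∑ i, lam i * w i ≤ m :=
  calc ∑ i, lam i * w i ≤ ∑ i, m * w i := Finset.sum_le_sum fun i _ => by
        rcases eq_or_ne (w i) 0 with h | h
        · simp [h]
        · exact mul_le_mul_of_nonneg_right (hm i h) (hw i)
    _ = m := by rw [← Finset.mul_sum, h1, mul_one]

end WeightedMean

theorem Fin.exists_lt_le_succ {α : Type*} [LinearOrder α] {n : ℕ} (f : Fin n → α) {a : α}
    (h0 : 0 < n) (hf0 : f ⟨0, h0⟩ < a) {j : Fin n} (hj : a ≤ f j) :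
    ∃ k : ℕ, ∃ hk : k + 1 < n, f ⟨k, by omega⟩ < a ∧ a ≤ f ⟨k + 1, hk⟩ := by
  classical
  have hP : ∃ m, ∃ hm : m < n, a ≤ f ⟨m, hm⟩ := ⟨j, j.2, hj⟩
  obtain ⟨hm, hfm⟩ := Nat.find_spec hP
  have hm0 : Nat.find hP ≠ 0 := by
    intro h
    simp only [h] at hfm
    exact (hf0.trans_le hfm).false
  refine ⟨Nat.find hP - 1, by omega, ?_, ?_⟩
  · have := Nat.find_min hP (show Nat.find hP - 1 < Nat.find hP by omega)
    exact not_le.mp fun h => this ⟨_, h⟩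
  · convert hfm using 3
    omega

section Eigenbasis

variable {ι κ : Type*} [Fintype ι] [Fintype κ] [DecidableEq ι] {v : κ → ι → ℂ}

theorem sum_vecMulVec_eq_one [DecidableEq κ]
    (hcard : Fintype.card κ = Fintype.card ι)
    (horth : ∀ i j, star (v i) ⬝ᵥ v j = if i = j then 1 else 0) :
    ∑ i, vecMulVec (v i) (star (v i)) = 1 := by
  let U : Matrix ι κ ℂ := of fun p i => v i p
  have hUU : Uᴴ * U = 1 := by
    ext i j
    simpa [U, mul_apply, dotProduct, one_apply] using horth i j
  have hUU' := congrFun₂ ((mul_eq_one_comm_of_card_eq _ _ _ hcard).mp hUU)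
  ext p q
  simpa [U, mul_apply, vecMulVec_apply, Matrix.sum_apply] using hUU' p q

theorem sum_dotProduct_smul (hv : ∑ i, vecMulVec (v i) (star (v i)) = 1) (z : ι → ℂ) :
    ∑ i, (star (v i) ⬝ᵥ z) • v i = z :=
  calc ∑ i, (star (v i) ⬝ᵥ z) • v i = (∑ i, vecMulVec (v i) (star (v i))) *ᵥ z := by
        simp [sum_mulVec, vecMulVec_mulVec]
    _ = z := by rw [hv, one_mulVec]

theorem mem_span_image_iff [DecidableEq κ] (hv : ∑ i, vecMulVec (v i) (star (v i)) = 1)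
    (horth : ∀ i j, star (v i) ⬝ᵥ v j = if i = j then 1 else 0) (S : Set κ) (z : ι → ℂ) :
    z ∈ Submodule.span ℂ (v '' S) ↔ ∀ j ∉ S, star (v j) ⬝ᵥ z = 0 := by
  refine ⟨fun hz j hj => ?_, fun h => ?_⟩
  · induction hz using Submodule.span_induction with
    | mem x hx =>
      obtain ⟨i, hi, rfl⟩ := hx
      rw [horth, if_neg (by rintro rfl; exact hj hi)]
    | zero => exact dotProduct_zero _
    | add x y _ _ hx hy => rw [dotProduct_add, hx, hy, add_zero]
    | smul t x _ hx => rw [dotProduct_smul, hx, smul_zero]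
  · rw [← sum_dotProduct_smul hv z]
    refine Submodule.sum_mem _ fun i _ => ?_
    by_cases hi : i ∈ S
    · exact Submodule.smul_mem _ _ (Submodule.subset_span ⟨i, hi, rfl⟩)
    · simp [h i hi]

end Eigenbasis

theorem isDensity_vecMulVec {ι : Type*} [Fintype ι] {z : ι → ℂ} (hz : z ⬝ᵥ star z = 1) :
    IsDensity (vecMulVec z (star z)) :=
  ⟨posSemidef_vecMulVec_self_star z, by rw [trace_vecMulVec, hz]⟩

section BasisDiag

variable {ι κ : Type*} [Fintype ι] {v : κ → ι → ℂ}

def basisDiag (v : κ → ι → ℂ) (σ : Matrix ι ι ℂ) (i : κ) : ℝ :=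
  (star (v i) ⬝ᵥ σ *ᵥ v i).re

theorem basisDiag_nonneg {σ : Matrix ι ι ℂ} (hσ : σ.PosSemidef) (i : κ) : 0 ≤ basisDiag v σ i :=
  (Complex.nonneg_iff.mp (hσ.dotProduct_mulVec_nonneg (v i))).1

theorem basisDiag_vecMulVec (z : ι → ℂ) (i : κ) :
    basisDiag v (vecMulVec z (star z)) i = Complex.normSq (star (v i) ⬝ᵥ z) := by
  rw [basisDiag, vecMulVec_mulVec, op_smul_eq_smul, dotProduct_smul, smul_eq_mul,
    star_dotProduct, Complex.star_def, ← Complex.normSq_eq_conj_mul_self, Complex.ofReal_re]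

variable [Fintype κ] [DecidableEq ι]

theorem re_trace_mul_eq_sum_basisDiag (hv : ∑ i, vecMulVec (v i) (star (v i)) = 1)
    {A : Matrix ι ι ℂ} {lam : κ → ℝ} (heig : ∀ i, A *ᵥ v i = (lam i : ℂ) • v i)
    (σ : Matrix ι ι ℂ) :
    (A * σ).trace.re = ∑ i, lam i * basisDiag v σ i := by
  have htr : (A * σ).trace = ∑ i, (lam i : ℂ) * (star (v i) ⬝ᵥ σ *ᵥ v i) :=
    calc (A * σ).trace = (σ * (A * ∑ i, vecMulVec (v i) (star (v i)))).trace := by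
          rw [hv, mul_one, trace_mul_comm]
      _ = ∑ i, (lam i : ℂ) * (star (v i) ⬝ᵥ σ *ᵥ v i) := by
          simp only [Finset.mul_sum, trace_sum, mul_vecMulVec, heig, mulVec_smul,
            trace_vecMulVec, dotProduct_comm _ (star _), dotProduct_smul, smul_eq_mul]
  simp [htr, Complex.re_sum, basisDiag]

theorem IsDensity.sum_basisDiag (hv : ∑ i, vecMulVec (v i) (star (v i)) = 1)
    {ρ : Matrix ι ι ℂ} (hρ : IsDensity ρ) :
    ∑ i, basisDiag v ρ i = 1 := by
  simpa [hρ.2] using (re_trace_mul_eq_sum_basisDiag hv (A := 1) (lam := 1) (by simp) ρ).symm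

variable {A : Matrix ι ι ℂ} {lam : κ → ℝ} {m : ℝ}

theorem le_re_trace_mul_of_isDensity (hv : ∑ i, vecMulVec (v i) (star (v i)) = 1)
    (heig : ∀ i, A *ᵥ v i = (lam i : ℂ) • v i) (hm : ∀ i, m ≤ lam i) {ρ : Matrix ι ι ℂ}
    (hρ : IsDensity ρ) :
    m ≤ (A * ρ).trace.re := by
  rw [re_trace_mul_eq_sum_basisDiag hv heig]
  exact le_sum_mul_of_forall_le (basisDiag_nonneg hρ.1) (hρ.sum_basisDiag hv) hm

theorem re_trace_mul_vecMulVec_le (hv : ∑ i, vecMulVec (v i) (star (v i)) = 1)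
    (heig : ∀ i, A *ᵥ v i = (lam i : ℂ) • v i) {z : ι → ℂ} (hz : z ⬝ᵥ star z = 1)
    (hm : ∀ i, star (v i) ⬝ᵥ z ≠ 0 → lam i ≤ m) :
    (A * vecMulVec z (star z)).trace.re ≤ m := by
  have hρ := isDensity_vecMulVec hz
  rw [re_trace_mul_eq_sum_basisDiag hv heig]
  refine sum_mul_le_of_forall_le (basisDiag_nonneg hρ.1) (hρ.sum_basisDiag hv) fun i hi => hm i ?_
  rwa [basisDiag_vecMulVec, Complex.normSq_eq_zero.ne] at hi

theorem lt_re_trace_mul_vecMulVec (hv : ∑ i, vecMulVec (v i) (star (v i)) = 1)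
    (heig : ∀ i, A *ᵥ v i = (lam i : ℂ) • v i) {z : ι → ℂ} (hz : z ⬝ᵥ star z = 1)
    (hm : ∀ i, m ≤ lam i) {j : κ} (hj : star (v j) ⬝ᵥ z ≠ 0) (hlt : m < lam j) :
    m < (A * vecMulVec z (star z)).trace.re := by
  have hρ := isDensity_vecMulVec hz
  rw [re_trace_mul_eq_sum_basisDiag hv heig]
  refine lt_sum_mul_of_forall_le (basisDiag_nonneg hρ.1) (hρ.sum_basisDiag hv) hm hlt ?_
  rwa [basisDiag_vecMulVec, Complex.normSq_pos]

end BasisDiag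

section ProductStates

theorem isUnitVec_iff_norm {d : ℕ} (x : Fin d → ℂ) :
    isUnitVec x ↔ ‖(WithLp.toLp 2 x : EuclideanSpace ℂ (Fin d))‖ = 1 := by
  rw [isUnitVec, ← pow_eq_one_iff_of_nonneg (norm_nonneg _) two_ne_zero,
    EuclideanSpace.norm_sq_eq]

theorem isUnitVec_iff_dotProduct_star {d : ℕ} (x : Fin d → ℂ) :
    isUnitVec x ↔ x ⬝ᵥ star x = 1 := by
  have hx : x ⬝ᵥ star x = ((∑ i, ‖x i‖ ^ 2 : ℝ) : ℂ) := by
    simp [dotProduct, Complex.mul_conj']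
  rw [isUnitVec, hx, Complex.ofReal_eq_one]

theorem exists_smul_isUnitVec {d : ℕ} {x : Fin d → ℂ} (hx : x ≠ 0) :
    ∃ t : ℂ, isUnitVec (t • x) := by
  have hx' : (WithLp.toLp 2 x : EuclideanSpace ℂ (Fin d)) ≠ 0 := by simpa using hx
  exact ⟨_, (isUnitVec_iff_norm _).2 (by rw [WithLp.toLp_smul]; exact norm_smul_inv_norm hx')⟩

theorem exists_isUnitVec {d : ℕ} (hd : 0 < d) : ∃ x : Fin d → ℂ, isUnitVec x :=
  ⟨Pi.single ⟨0, hd⟩ 1, by simp [isUnitVec, Pi.single_apply, apply_ite]⟩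

theorem isCompact_setOf_isUnitVec (d : ℕ) : IsCompact {x : Fin d → ℂ | isUnitVec x} := by
  have hK : {x : Fin d → ℂ | isUnitVec x} =
      (PiLp.homeomorph 2 fun _ : Fin d => ℂ).symm ⁻¹' Metric.sphere 0 1 := by
    ext x
    rw [Set.mem_preimage, mem_sphere_zero_iff_norm]
    exact isUnitVec_iff_norm x
  rw [hK]
  exact (Homeomorph.isCompact_preimage _).2 (isCompact_sphere 0 1)

def prodVec {α β : Type*} (x : α → ℂ) (y : β → ℂ) : α × β → ℂ :=
  fun ij => x ij.1 * y ij.2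

theorem prodVec_dotProduct_star {α β : Type*} [Fintype α] [Fintype β] (x : α → ℂ) (y : β → ℂ) :
    prodVec x y ⬝ᵥ star (prodVec x y) = (x ⬝ᵥ star x) * (y ⬝ᵥ star y) := by
  simp only [dotProduct, prodVec, Fintype.sum_prod_type, Finset.sum_mul_sum, Pi.star_apply,
    star_mul']
  exact Finset.sum_congr rfl fun i _ => Finset.sum_congr rfl fun j _ => by ring

variable {M N : ℕ}

theorem outer_kronecker_outer (x : Fin M → ℂ) (y : Fin N → ℂ) :
    outer x ⊗ₖ outer y = vecMulVec (prodVec x y) (star (prodVec x y)) := by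
  ext ⟨i, j⟩ ⟨i', j'⟩
  simp only [kroneckerMap_apply, outer, vecMulVec_apply, prodVec, Pi.star_apply, star_mul']
  ring

theorem prodVec_dotProduct_star_eq_one {x : Fin M → ℂ} {y : Fin N → ℂ} (hx : isUnitVec x)
    (hy : isUnitVec y) :
    prodVec x y ⬝ᵥ star (prodVec x y) = 1 := by
  rw [prodVec_dotProduct_star, (isUnitVec_iff_dotProduct_star x).1 hx,
    (isUnitVec_iff_dotProduct_star y).1 hy, one_mul]

theorem exists_isUnitVec_prodVec_eq_smul {x : Fin M → ℂ} {y : Fin N → ℂ}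
    (hxy : prodVec x y ≠ 0) :
    ∃ x' y', isUnitVec x' ∧ isUnitVec y' ∧ ∃ t : ℂ, prodVec x' y' = t • prodVec x y := by
  have hx : x ≠ 0 := by rintro rfl; exact hxy (funext fun _ => zero_mul _)
  have hy : y ≠ 0 := by rintro rfl; exact hxy (funext fun _ => mul_zero _)
  obtain ⟨s, hs⟩ := exists_smul_isUnitVec hx
  obtain ⟨t, ht⟩ := exists_smul_isUnitVec hy
  refine ⟨_, _, hs, ht, s * t, funext fun ij => ?_⟩
  simp only [prodVec, Pi.smul_apply, smul_eq_mul]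
  ring

end ProductStates

theorem le_re_trace_mul_of_mem_convexHull {ι : Type*} [Fintype ι] (A : Matrix ι ι ℂ)
    {S : Set (Matrix ι ι ℂ)} {a : ℝ} (h : ∀ σ ∈ S, a ≤ (A * σ).trace.re) :
    ∀ σ ∈ convexHull ℝ S, a ≤ (A * σ).trace.re :=
  fun _ hσ => convexHull_min h (convex_halfSpace_ge
    ⟨fun σ τ => by simp [mul_add], fun c σ => by simp⟩ a) hσ

section Witness

variable {M N n : ℕ} {A : Matrix (Fin M × Fin N) (Fin M × Fin N) ℂ} {lam : Fin n → ℝ}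
  {v : Fin n → Fin M × Fin N → ℂ}

theorem exists_gap_of_isLeftEW (hM : 0 < M) (hN : 0 < N) (hn : 0 < n) (hmono : Monotone lam)
    (horth : ∀ i j, star (v i) ⬝ᵥ v j = if i = j then 1 else 0)
    (hv : ∑ i, vecMulVec (v i) (star (v i)) = 1) (heig : ∀ i, A *ᵥ v i = (lam i : ℂ) • v i)
    (h : IsLeftEW M N A) :
    ∃ k : ℕ, ∃ hk : k + 1 < n,
      (∀ z ∈ Submodule.span ℂ (v '' {i : Fin n | (i : ℕ) ≤ k}), IsProdVec M N z → z = 0) ∧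
      lam ⟨k, by omega⟩ < lam ⟨k + 1, hk⟩ := by
  obtain ⟨a, hsep, ρ, hρ, hρa⟩ := h
  have hprod : ∀ x y, isUnitVec x → isUnitVec y →
      a ≤ (A * vecMulVec (prodVec x y) (star (prodVec x y))).trace.re := fun x y hx hy =>
    outer_kronecker_outer x y ▸ hsep _ (subset_convexHull ℝ _ ⟨x, y, hx, hy, rfl⟩)
  have h0 : lam ⟨0, hn⟩ < a :=
    (le_re_trace_mul_of_isDensity hv heig (fun i => hmono (Nat.zero_le _)) hρ).trans_lt hρa
  have : Nonempty (Fin n) := ⟨⟨0, hn⟩⟩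
  obtain ⟨j, hj⟩ := Finite.exists_max lam
  obtain ⟨x, hx⟩ := exists_isUnitVec hM
  obtain ⟨y, hy⟩ := exists_isUnitVec hN
  have ha : a ≤ lam j := (hprod x y hx hy).trans
    (re_trace_mul_vecMulVec_le hv heig (prodVec_dotProduct_star_eq_one hx hy) fun i _ => hj i)
  obtain ⟨k, hk, hka, hak⟩ := Fin.exists_lt_le_succ lam hn h0 ha
  refine ⟨k, hk, fun z hz ⟨x, y, hxy⟩ => ?_, hka.trans_le hak⟩
  by_contra hz0
  subst hxy
  obtain ⟨x', y', hx', hy', t, hxy'⟩ := exists_isUnitVec_prodVec_eq_smul hz0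
  have hspan : prodVec x' y' ∈ Submodule.span ℂ (v '' {i : Fin n | (i : ℕ) ≤ k}) :=
    hxy' ▸ Submodule.smul_mem _ t hz
  refine (hprod x' y' hx' hy').not_gt ((re_trace_mul_vecMulVec_le hv heig
    (prodVec_dotProduct_star_eq_one hx' hy') fun i hi => hmono ?_).trans_lt hka)
  by_contra hik
  exact hi ((mem_span_image_iff hv horth _ _).1 hspan i hik)

theorem isLeftEW_of_gap (hM : 0 < M) (hN : 0 < N) (hmono : Monotone lam)
    (horth : ∀ i j, star (v i) ⬝ᵥ v j = if i = j then 1 else 0)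
    (hv : ∑ i, vecMulVec (v i) (star (v i)) = 1) (heig : ∀ i, A *ᵥ v i = (lam i : ℂ) • v i)
    {k : ℕ} (hk : k + 1 < n)
    (hspan : ∀ z ∈ Submodule.span ℂ (v '' {i : Fin n | (i : ℕ) ≤ k}), IsProdVec M N z → z = 0)
    (hgap : lam ⟨k, by omega⟩ < lam ⟨k + 1, hk⟩) :
    IsLeftEW M N A := by
  have hn : 0 < n := by omega
  obtain ⟨x₀, hx₀⟩ := exists_isUnitVec hM
  obtain ⟨y₀, hy₀⟩ := exists_isUnitVec hN
  have hcont : Continuous fun p : (Fin M → ℂ) × (Fin N → ℂ) =>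
      (A * vecMulVec (prodVec p.1 p.2) (star (prodVec p.1 p.2))).trace.re := by
    unfold prodVec
    fun_prop
  obtain ⟨⟨x, y⟩, ⟨hx, hy⟩, hmin⟩ :=
    ((isCompact_setOf_isUnitVec M).prod (isCompact_setOf_isUnitVec N)).exists_isMinOn
      ⟨(x₀, y₀), hx₀, hy₀⟩ hcont.continuousOn
  have hz := prodVec_dotProduct_star_eq_one hx hy
  obtain ⟨j, hkj, hj⟩ : ∃ j : Fin n, k < (j : ℕ) ∧ star (v j) ⬝ᵥ prodVec x y ≠ 0 := by
    by_contra! h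
    have := hspan _ ((mem_span_image_iff hv horth _ _).2 fun j hj => h j (not_le.mp hj))
      ⟨x, y, rfl⟩
    rw [this, zero_dotProduct] at hz
    exact zero_ne_one hz
  have h0j : lam ⟨0, hn⟩ < lam j :=
    calc lam ⟨0, hn⟩ ≤ lam ⟨k, by omega⟩ := hmono (Nat.zero_le k)
      _ < lam ⟨k + 1, hk⟩ := hgap
      _ ≤ lam j := hmono hkj
  have hv₀ : v ⟨0, hn⟩ ⬝ᵥ star (v ⟨0, hn⟩) = 1 := by rw [dotProduct_comm, horth, if_pos rfl]
  refine ⟨(A * vecMulVec (prodVec x y) (star (prodVec x y))).trace.re,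
    le_re_trace_mul_of_mem_convexHull A ?_, _, isDensity_vecMulVec hv₀, ?_⟩
  · rintro _ ⟨x', y', hx', hy', rfl⟩
    rw [outer_kronecker_outer]
    exact isMinOn_iff.mp hmin (x', y') ⟨hx', hy'⟩
  · refine (re_trace_mul_vecMulVec_le hv heig hv₀ fun i hi => ?_).trans_lt
      (lt_re_trace_mul_vecMulVec hv heig hz (fun i => hmono (Nat.zero_le _)) hj h0j)
    obtain rfl : i = ⟨0, hn⟩ := by
      by_contra h
      simp [horth, h] at hi
    rfl

end Witness

/-- Spectral characterisation of left entanglement witnesses: `A` is a left entanglement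
witness iff for some `k ≤ MN - 2` the span of the eigenvectors corresponding to the `k+1`
smallest eigenvalues contains no nonzero product vector and `λ_{k+1} > λ_k`. -/
theorem isLeftEW_iff_spectral (M N : ℕ) (hM : 2 ≤ M) (hN : 2 ≤ N)
    (A : Matrix (Fin M × Fin N) (Fin M × Fin N) ℂ)
    (lam : Fin (M * N) → ℝ) (hmono : Monotone lam)
    (v : Fin (M * N) → (Fin M × Fin N → ℂ))
    (horth : ∀ i j, star (v i) ⬝ᵥ v j = if i = j then 1 else 0)
    (heig : ∀ i, A.mulVec (v i) = (lam i : ℂ) • v i) :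
    IsLeftEW M N A ↔
      ∃ k : ℕ, ∃ hk : k + 1 < M * N,
        (∀ z ∈ Submodule.span ℂ (v '' {i : Fin (M * N) | (i : ℕ) ≤ k}),
            IsProdVec M N z → z = 0) ∧
        lam ⟨k, by omega⟩ < lam ⟨k + 1, hk⟩ := by
  have hv := sum_vecMulVec_eq_one (by simp) horth
  exact ⟨exists_gap_of_isLeftEW (by omega) (by omega) (by positivity) hmono horth hv heig,
    fun ⟨_, hk, hspan, hgap⟩ =>
      isLeftEW_of_gap (by omega) (by omega) hmono horth hv heig hk hspan hgap⟩

end
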